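/- arXiv:1611.10216 — 3 statements merged into one kernel-verified Lean document; each statement's English description precedes it below -/
import Mathlib

section
/- Let Z_1,…,Z_l ∈ ℂ*, and let X_i : V_{i+1} → V_i, D_i : V_i → V_{i+1} (indices mod l) be linear maps on N-dimensional spaces satisfying Z_i(1 + X_iD_i) = Z_{i−1}(1 + D_{i−1}X_{i−1}) for 2 ≤ i ≤ l. Set X = X_1⋯X_l, Y = Z_1(1 + X_1D_1). Then for every 0 ≤ r ≤ l: Z_1⋯Z_r X_1⋯X_r D_r⋯D_1 = (Y − Z_1)(Y − Z_2)⋯(Y − Z_r) as endomorphisms of V_1. In particular Z_1⋯Z_l·XD = (Y − Z_1)⋯(Y − Z_l) where D = D_l⋯D_1. -/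
/-! The relation at vertex `k + 1` says that `Z (k+1) • (1 + X (k+1) * D (k+1))` equals
`Z k • (1 + D k * X k)`, and `X k` intertwines `1 + D k * X k` with `1 + X k * D k`. Hence
`X 1 ⋯ X k` intertwines `Z (k+1) • (1 + X (k+1) * D (k+1))` with `Y`, i.e.
`X 1 ⋯ X k * (Z (k+1) • X (k+1) * D (k+1)) = (Y - Z (k+1)) * X 1 ⋯ X k`. Inserting this into
`X 1 ⋯ X (k+1) * D (k+1) ⋯ D 1` gives the induction step, since the factors `Y - Z i` commute. -/

section CyclicQuiver

variable {M : Type*} [Monoid M]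

def ascProd (f : ℕ → M) (k : ℕ) : M := ((List.range k).map fun i => f (i + 1)).prod

def descProd (f : ℕ → M) (k : ℕ) : M := ((List.range k).reverse.map fun i => f (i + 1)).prod

@[simp]
lemma ascProd_zero (f : ℕ → M) : ascProd f 0 = 1 := rfl

@[simp]
lemma descProd_zero (f : ℕ → M) : descProd f 0 = 1 := rfl

lemma ascProd_succ (f : ℕ → M) (k : ℕ) : ascProd f (k + 1) = ascProd f k * f (k + 1) := by
  simp [ascProd, List.range_succ]

lemma descProd_succ (f : ℕ → M) (k : ℕ) : descProd f (k + 1) = f (k + 1) * descProd f k := by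
  simp [descProd, List.range_succ]

variable {K A : Type*} [CommRing K] [Ring A] [Algebra K A] (Z : ℕ → K) (X D : ℕ → A)

lemma mul_smul_one_add_mul_comm (z : K) (x d : A) :
    x * (z • (1 + d * x)) = z • (1 + x * d) * x := by
  rw [mul_smul_comm, smul_mul_assoc, mul_add, add_mul, mul_one, one_mul, mul_assoc]

lemma ascProd_mul_smul_one_add_mul (k : ℕ)
    (hrel : ∀ i, i + 2 ≤ k + 1 →
      Z (i + 2) • (1 + X (i + 2) * D (i + 2)) = Z (i + 1) • (1 + D (i + 1) * X (i + 1))) :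
    ascProd X k * (Z (k + 1) • (1 + X (k + 1) * D (k + 1)))
      = Z 1 • (1 + X 1 * D 1) * ascProd X k := by
  induction k with
  | zero => simp
  | succ k ih =>
    rw [ascProd_succ, mul_assoc, hrel k le_rfl, mul_smul_one_add_mul_comm, ← mul_assoc,
      ih fun i hi => hrel i (by omega), mul_assoc]

lemma ascProd_mul_smul_mul (k : ℕ)
    (hrel : ∀ i, i + 2 ≤ k + 1 →
      Z (i + 2) • (1 + X (i + 2) * D (i + 2)) = Z (i + 1) • (1 + D (i + 1) * X (i + 1))) :
    ascProd X k * (Z (k + 1) • (X (k + 1) * D (k + 1)))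
      = (Z 1 • (1 + X 1 * D 1) - Z (k + 1) • 1) * ascProd X k := by
  have h := ascProd_mul_smul_one_add_mul Z X D k hrel
  rw [smul_add, mul_add, mul_smul_one] at h
  rw [sub_mul, ← h, smul_one_mul, add_sub_cancel_left]

theorem ascProd_smul_ascProd_mul_descProd (r : ℕ)
    (hrel : ∀ i, i + 2 ≤ r →
      Z (i + 2) • (1 + X (i + 2) * D (i + 2)) = Z (i + 1) • (1 + D (i + 1) * X (i + 1))) :
    ascProd Z r • (ascProd X r * descProd D r)
      = ascProd (fun i => Z 1 • (1 + X 1 * D 1) - Z i • (1 : A)) r := by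
  set Y : A := Z 1 • (1 + X 1 * D 1)
  have hcomm : ∀ a b : K, Commute (Y - a • (1 : A)) (Y - b • 1) := fun a b =>
    ((Commute.refl Y).sub_right ((Commute.one_right Y).smul_right b)).sub_left
      (((Commute.one_left Y).smul_left a).sub_right (((Commute.refl 1).smul_left a).smul_right b))
  induction r with
  | zero => simp
  | succ k ih =>
    calc ascProd Z (k + 1) • (ascProd X (k + 1) * descProd D (k + 1))
        = ascProd Z k • (ascProd X k * (Z (k + 1) • (X (k + 1) * D (k + 1))) * descProd D k) := by
          rw [ascProd_succ, ascProd_succ, descProd_succ, mul_smul, mul_smul_comm,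
            smul_mul_assoc, mul_assoc, mul_assoc, mul_assoc]
      _ = (Y - Z (k + 1) • 1) * (ascProd Z k • (ascProd X k * descProd D k)) := by
          rw [ascProd_mul_smul_mul Z X D k hrel, mul_assoc, mul_smul_comm]
      _ = ascProd (fun i => Y - Z i • (1 : A)) (k + 1) := by
          rw [ih fun i hi => hrel i (by omega), ascProd_succ]
          refine (Commute.list_prod_right _ _ fun x hx => ?_).eq
          obtain ⟨i, -, rfl⟩ := List.mem_map.mp hx
          exact hcomm _ _

end CyclicQuiver

theorem statement16_general (N l : ℕ) (Z : ℕ → ℂ)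
    (Xm Dm : ℕ → Matrix (Fin N) (Fin N) ℂ)
    (hrel : ∀ i, 2 ≤ i → i ≤ l →
      Z i • ((1 : Matrix (Fin N) (Fin N) ℂ) + Xm i * Dm i)
        = Z (i - 1) • ((1 : Matrix (Fin N) (Fin N) ℂ) + Dm (i - 1) * Xm (i - 1))) :
    ∀ r, r ≤ l →
      (((List.range r).map (fun i => Z (i + 1))).prod) •
        ((((List.range r).map (fun i => Xm (i + 1))).prod) *
          (((List.range r).reverse.map (fun i => Dm (i + 1))).prod))
      = (((List.range r).map (fun i =>
          (Z 1 • ((1 : Matrix (Fin N) (Fin N) ℂ) + Xm 1 * Dm 1)) - Z (i + 1) • 1)).prod) :=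
  fun r hr => ascProd_smul_ascProd_mul_descProd Z Xm Dm r fun i hi => by
    simpa using hrel (i + 2) (by omega) (by omega)

theorem statement16 (N l : ℕ) (Z : ℕ → ℂ) (hZ : ∀ i, 1 ≤ i → i ≤ l → Z i ≠ 0)
    (Xm Dm : ℕ → Matrix (Fin N) (Fin N) ℂ)
    (hrel : ∀ i, 2 ≤ i → i ≤ l →
      Z i • ((1 : Matrix (Fin N) (Fin N) ℂ) + Xm i * Dm i)
        = Z (i - 1) • ((1 : Matrix (Fin N) (Fin N) ℂ) + Dm (i - 1) * Xm (i - 1))) :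
    ∀ r, r ≤ l →
      (((List.range r).map (fun i => Z (i + 1))).prod) •
        ((((List.range r).map (fun i => Xm (i + 1))).prod) *
          (((List.range r).reverse.map (fun i => Dm (i + 1))).prod))
      = (((List.range r).map (fun i =>
          (Z 1 • ((1 : Matrix (Fin N) (Fin N) ℂ) + Xm 1 * Dm 1)) - Z (i + 1) • 1)).prod) :=
  statement16_general N l Z Xm Dm hrel
end

section
/- Let t not be a root of unity and Z_1,…,Z_l ∈ ℂ* with Z_i/Z_j ∉ t^{ℤ} for i ≠ j. Suppose X, D, Y, T are N×N matrices with Y invertible, satisfying XD = (Z_1^{-1}Y − 1)⋯(Z_l^{-1}Y − 1), DX = (Z_1^{-1}YT − 1)⋯(Z_l^{-1}YT − 1), YX = XYT, YTD = DY, where T is conjugate to diag(t^{-1},…,t^{-1},t^{N−1}). Then the joint action of (X, D, Y, T) on ℂ^N is irreducible. -/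
/-!
`T - t⁻¹` has rank at most one, so a subspace `W` invariant under `X, D, Y, T` either lies in
its kernel or contains its range. Hence `T` acts as `t⁻¹` on `W` or on `ℂ^N ⧸ W`, and the
relations pass to that space, where they give `Y D = t D Y` and `Y X = t⁻¹ X Y`: `D` and `X`
multiply eigenvalues of `Y` by `t` and `t⁻¹`. As `t` is not a root of unity and `Y` has finitely
many eigenvalues, iterating `D` on an eigenvector reaches an eigenvector `w` with `D w = 0`, and
`X D w = 0` forces its eigenvalue to be some `Z j`. Iterating `X` on `w` likewise reaches `u` with
`X u = 0` and eigenvalue `t⁻ᵐ Z j`, and `D X u = 0` forces `t⁻ᵐ⁻¹ Z j = Z k`, which the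
hypothesis on the `Z i` excludes. So that space is zero.
-/

open Module Function LinearMap

theorem pow_injective_of_forall_pow_ne_one {K : Type*} [Field K] {c : K} (hc0 : c ≠ 0)
    (hc : ∀ n ≠ 0, c ^ n ≠ 1) : Injective (c ^ · : ℕ → K) := by
  have hu : Injective (Units.mk0 c hc0 ^ · : ℕ → Kˣ) := by
    refine injective_pow_iff_not_isOfFinOrder.2 fun hfin => ?_
    obtain ⟨n, hn, hcn⟩ := isOfFinOrder_iff_pow_eq_one.1 hfin
    exact hc n hn.ne' (by simpa using congrArg Units.val hcn)
  exact fun a b hab => hu (Units.ext (by simpa using hab))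

namespace Module.End

variable {K V : Type*} [Field K] [AddCommGroup V] [Module K V]

theorem list_prod_ofFn_apply_eq_smul {l : ℕ} {f : Fin l → End K V} {a : Fin l → K} {v : V}
    (h : ∀ i, f i v = a i • v) : (List.ofFn f).prod v = (∏ i, a i) • v := by
  induction l with
  | zero => simp
  | succ l ih =>
    rw [List.ofFn_succ, List.prod_cons, mul_apply, ih fun i => h i.succ, map_smul, h 0,
      smul_smul, Fin.prod_univ_succ, mul_comm]

theorem exists_mul_eq_one_of_list_prod_apply_eq_zero {l : ℕ} {y : End K V} {μ : K} {v : V}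
    (hv : y v = μ • v) (hv0 : v ≠ 0) {c : Fin l → K}
    (h : (List.ofFn fun i => c i • y - 1).prod v = 0) : ∃ i, c i * μ = 1 := by
  rw [list_prod_ofFn_apply_eq_smul (a := fun i => c i * μ - 1) fun i => by
    rw [LinearMap.sub_apply, LinearMap.smul_apply, hv, smul_smul, one_apply, sub_smul,
      one_smul]] at h
  obtain ⟨i, -, hi⟩ := Finset.prod_eq_zero_iff.1 ((smul_eq_zero.1 h).resolve_right hv0)
  exact ⟨i, sub_eq_zero.1 hi⟩

theorem pow_apply_mem_eigenspace_of_mul_eq_smul_mul {x y : End K V} {c μ : K}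
    (hyx : y * x = c • (x * y)) {v : V} (hv : v ∈ y.eigenspace μ) (n : ℕ) :
    (x ^ n) v ∈ y.eigenspace (c ^ n * μ) := by
  induction n with
  | zero => simpa using hv
  | succ n ih =>
    rw [mem_eigenspace_iff] at ih ⊢
    rw [pow_succ', mul_apply, ← mul_apply y, hyx, LinearMap.smul_apply, mul_apply, ih, map_smul,
      smul_smul, pow_succ', mul_assoc]

theorem exists_hasEigenvector_pow_apply_eq_zero [FiniteDimensional K V] {x y : End K V}
    {c μ : K} (hc0 : c ≠ 0) (hc : ∀ n ≠ 0, c ^ n ≠ 1) (hμ : μ ≠ 0)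
    (hyx : y * x = c • (x * y)) {v : V} (hv : y.HasEigenvector μ v) :
    ∃ m : ℕ, y.HasEigenvector (c ^ m * μ) ((x ^ m) v) ∧ x ((x ^ m) v) = 0 := by
  by_contra! hne
  have hall : ∀ m : ℕ, y.HasEigenvector (c ^ m * μ) ((x ^ m) v) := by
    intro m
    induction m with
    | zero => simpa using hv
    | succ m ih =>
      refine ⟨pow_apply_mem_eigenspace_of_mul_eq_smul_mul hyx hv.1 _, ?_⟩
      rw [pow_succ', mul_apply]
      exact hne m ih
  exact Set.infinite_of_injective_forall_mem
    (fun a b hab => pow_injective_of_forall_pow_ne_one hc0 hc (mul_right_cancel₀ hμ hab))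
    (fun m => hasEigenvalue_of_hasEigenvector (hall m)) y.finite_hasEigenvalue

end Module.End

section Intertwining

variable {K V V' : Type*} [Field K] [AddCommGroup V] [Module K V] [AddCommGroup V'] [Module K V']

def LinearMap.intertwiningSubalgebra (φ : V →ₗ[K] V') :
    Subalgebra K (End K V × End K V') where
  carrier := {a | φ ∘ₗ a.1 = a.2 ∘ₗ φ}
  mul_mem' {a b} ha hb := by
    change φ ∘ₗ (a.1 ∘ₗ b.1) = (a.2 ∘ₗ b.2) ∘ₗ φ
    rw [← comp_assoc, ha, comp_assoc, hb, comp_assoc]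
  add_mem' ha hb := by
    simp only [Set.mem_ofPred_eq, Prod.fst_add, Prod.snd_add, comp_add, add_comp] at *
    rw [ha, hb]
  algebraMap_mem' c := by ext; simp

theorem LinearMap.fst_intertwiningSubalgebra_injective {φ : V →ₗ[K] V'} (hφ : Surjective φ) :
    Injective ((AlgHom.fst K _ _).comp φ.intertwiningSubalgebra.val) := by
  rintro ⟨a, ha⟩ ⟨b, hb⟩ (hab : a.1 = b.1)
  have : a.2 ∘ₗ φ = b.2 ∘ₗ φ := by
    rw [← show φ ∘ₗ a.1 = a.2 ∘ₗ φ from ha, ← show φ ∘ₗ b.1 = b.2 ∘ₗ φ from hb, hab]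
  exact Subtype.ext (Prod.ext hab ((cancel_right hφ).1 this))

theorem LinearMap.snd_intertwiningSubalgebra_injective {φ : V →ₗ[K] V'} (hφ : Injective φ) :
    Injective ((AlgHom.snd K _ _).comp φ.intertwiningSubalgebra.val) := by
  rintro ⟨a, ha⟩ ⟨b, hb⟩ (hab : a.2 = b.2)
  have : φ ∘ₗ a.1 = φ ∘ₗ b.1 := by
    rw [show φ ∘ₗ a.1 = a.2 ∘ₗ φ from ha, show φ ∘ₗ b.1 = b.2 ∘ₗ φ from hb, hab]
  exact Subtype.ext (Prod.ext ((cancel_left hφ).1 this) hab)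

end Intertwining

section Relations

variable {K A B : Type*} [Field K] [Ring A] [Algebra K A] [Ring B] [Algebra K B] {l : ℕ}

/-- The relations of the quadruple description of the multiplicative Calogero–Moser space. -/
structure IsMCMQuadruple (Z : Fin l → K) (x d y T : A) : Prop where
  xd_eq : x * d = (List.ofFn fun i => (Z i)⁻¹ • y - 1).prod
  dx_eq : d * x = (List.ofFn fun i => (Z i)⁻¹ • (y * T) - 1).prod
  yx_eq : y * x = x * y * T
  ytd_eq : y * T * d = d * y

theorem AlgHom.map_list_prod_ofFn_smul_sub_one (f : A →ₐ[K] B) (c : Fin l → K) (a : A) :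
    f (List.ofFn fun i => c i • a - 1).prod = (List.ofFn fun i => c i • f a - 1).prod := by
  simp [map_list_prod, List.map_ofFn, Function.comp_def]

variable {Z : Fin l → K} {x d y T : A}

theorem IsMCMQuadruple.map (h : IsMCMQuadruple Z x d y T) (f : A →ₐ[K] B) :
    IsMCMQuadruple Z (f x) (f d) (f y) (f T) where
  xd_eq := by rw [← map_mul, h.xd_eq, f.map_list_prod_ofFn_smul_sub_one]
  dx_eq := by rw [← map_mul, h.dx_eq, f.map_list_prod_ofFn_smul_sub_one, map_mul]
  yx_eq := by rw [← map_mul, h.yx_eq, map_mul, map_mul]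
  ytd_eq := by rw [← map_mul, ← map_mul, h.ytd_eq, map_mul]

theorem IsMCMQuadruple.of_map {f : A →ₐ[K] B} (hf : Injective f)
    (h : IsMCMQuadruple Z (f x) (f d) (f y) (f T)) : IsMCMQuadruple Z x d y T where
  xd_eq := hf (by rw [map_mul, h.xd_eq, f.map_list_prod_ofFn_smul_sub_one])
  dx_eq := hf (by rw [map_mul, h.dx_eq, f.map_list_prod_ofFn_smul_sub_one, map_mul])
  yx_eq := hf (by simp only [map_mul, h.yx_eq])
  ytd_eq := hf (by simp only [map_mul, h.ytd_eq])

end Relations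

section Transfer

variable {K V V' : Type*} [Field K] [AddCommGroup V] [Module K V] [AddCommGroup V'] [Module K V']
  {l : ℕ} {Z : Fin l → K}

theorem IsMCMQuadruple.of_surjective {x d y T : End K V} {x' d' y' T' : End K V'}
    (h : IsMCMQuadruple Z x d y T) {φ : V →ₗ[K] V'} (hφ : Surjective φ)
    (hx : φ ∘ₗ x = x' ∘ₗ φ) (hd : φ ∘ₗ d = d' ∘ₗ φ) (hy : φ ∘ₗ y = y' ∘ₗ φ)
    (hT : φ ∘ₗ T = T' ∘ₗ φ) : IsMCMQuadruple Z x' d' y' T' :=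
  (IsMCMQuadruple.of_map (fst_intertwiningSubalgebra_injective hφ) (x := ⟨(x, x'), hx⟩)
    (d := ⟨(d, d'), hd⟩) (y := ⟨(y, y'), hy⟩) (T := ⟨(T, T'), hT⟩) h).map
    ((AlgHom.snd K _ _).comp φ.intertwiningSubalgebra.val)

theorem IsMCMQuadruple.of_injective {x d y T : End K V} {x' d' y' T' : End K V'}
    (h : IsMCMQuadruple Z x d y T) {φ : V' →ₗ[K] V} (hφ : Injective φ)
    (hx : φ ∘ₗ x' = x ∘ₗ φ) (hd : φ ∘ₗ d' = d ∘ₗ φ) (hy : φ ∘ₗ y' = y ∘ₗ φ)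
    (hT : φ ∘ₗ T' = T ∘ₗ φ) : IsMCMQuadruple Z x' d' y' T' :=
  (IsMCMQuadruple.of_map (snd_intertwiningSubalgebra_injective hφ) (x := ⟨(x', x), hx⟩)
    (d := ⟨(d', d), hd⟩) (y := ⟨(y', y), hy⟩) (T := ⟨(T', T), hT⟩) h).map
    ((AlgHom.fst K _ _).comp φ.intertwiningSubalgebra.val)

end Transfer

section Irreducibility

variable {K V : Type*} [Field K] [AddCommGroup V] [Module K V] {l : ℕ}

theorem IsMCMQuadruple.subsingleton [IsAlgClosed K] [FiniteDimensional K V] {t : K}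
    (ht0 : t ≠ 0) (ht : ∀ n ≠ 0, t ^ n ≠ 1) {Z : Fin l → K}
    (hZ : ∀ i j (n : ℕ), Z i ≠ t ^ (n + 1) * Z j) {x d y : End K V}
    (h : IsMCMQuadruple Z x d y (t⁻¹ • 1)) (hy : Injective y) : Subsingleton V := by
  by_contra hV
  rw [not_subsingleton_iff_nontrivial] at hV
  have hμ0 {μ : K} {v : V} (hv : y.HasEigenvector μ v) : μ ≠ 0 := by
    rintro rfl
    exact hv.2 (hy (by rw [hv.apply_eq_smul, zero_smul, map_zero]))
  have hyd : y * d = t • (d * y) := by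
    rw [← h.ytd_eq, mul_smul_comm, mul_one, smul_mul_assoc, smul_smul,
      mul_inv_cancel₀ ht0, one_smul]
  have hyx : y * x = t⁻¹ • (x * y) := by rw [h.yx_eq, mul_smul_comm, mul_one]
  obtain ⟨μ₀, hμ₀⟩ := y.exists_eigenvalue
  obtain ⟨w₀, hw₀⟩ := hμ₀.exists_hasEigenvector
  obtain ⟨k, hw, hdw⟩ := End.exists_hasEigenvector_pow_apply_eq_zero ht0 ht (hμ0 hw₀) hyd hw₀
  obtain ⟨j, hj⟩ := End.exists_mul_eq_one_of_list_prod_apply_eq_zero hw.apply_eq_smul hw.2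
    (by rw [← h.xd_eq, End.mul_apply, hdw, map_zero])
  obtain ⟨m, hu, hxu⟩ := End.exists_hasEigenvector_pow_apply_eq_zero (inv_ne_zero ht0)
    (fun n hn => by rw [inv_pow, Ne, inv_eq_one]; exact ht n hn) (hμ0 hw) hyx hw
  obtain ⟨i, hi⟩ := End.exists_mul_eq_one_of_list_prod_apply_eq_zero (y := y * (t⁻¹ • 1))
    (by rw [End.mul_apply, LinearMap.smul_apply, End.one_apply, map_smul, hu.apply_eq_smul,
      smul_smul])
    hu.2 (by rw [← h.dx_eq, End.mul_apply, hxu, map_zero])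
  have eq_of_inv_mul_eq_one {a b : K} (hab : a⁻¹ * b = 1) : a = b :=
    (inv_mul_eq_one₀ fun ha => left_ne_zero_of_mul_eq_one hab (by rw [ha, inv_zero])).1 hab
  apply hZ j i m
  rw [eq_of_inv_mul_eq_one hj, eq_of_inv_mul_eq_one hi, ← mul_assoc t⁻¹, ← pow_succ', ← mul_assoc,
    ← mul_pow, mul_inv_cancel₀ ht0, one_pow, one_mul]

theorem LinearMap.le_ker_or_range_le_of_finrank_range_le_one [FiniteDimensional K V]
    {f : End K V} (hf : finrank K (range f) ≤ 1) {W : Submodule K V} (hW : ∀ v ∈ W, f v ∈ W) :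
    W ≤ ker f ∨ range f ≤ W := by
  by_contra! h
  obtain ⟨v, hv, hfv⟩ := SetLike.not_le_iff_exists.1 h.1
  have hspan : K ∙ f v = range f :=
    Submodule.eq_of_le_of_finrank_le
      ((Submodule.span_singleton_le_iff_mem _ _).2 (mem_range_self f v))
      (hf.trans (finrank_span_singleton hfv).ge)
  exact h.2 (hspan ▸ (Submodule.span_singleton_le_iff_mem _ _).2 (hW v hv))

theorem IsMCMQuadruple.eq_bot_or_eq_top [IsAlgClosed K] [FiniteDimensional K V] {t : K}
    (ht0 : t ≠ 0) (ht : ∀ n ≠ 0, t ^ n ≠ 1) {Z : Fin l → K}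
    (hZ : ∀ i j (n : ℕ), Z i ≠ t ^ (n + 1) * Z j) {x d y T : End K V}
    (h : IsMCMQuadruple Z x d y T) (hy : Injective y) (hT : finrank K (range (T - t⁻¹ • 1)) ≤ 1)
    {W : Submodule K V} (hWx : ∀ v ∈ W, x v ∈ W) (hWd : ∀ v ∈ W, d v ∈ W)
    (hWy : ∀ v ∈ W, y v ∈ W) (hWT : ∀ v ∈ W, T v ∈ W) : W = ⊥ ∨ W = ⊤ := by
  rcases le_ker_or_range_le_of_finrank_range_le_one hT
    (fun v hv => W.sub_mem (hWT v hv) (W.smul_mem _ hv)) with hker | hrange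
  · left
    rw [← Submodule.subsingleton_iff_eq_bot]
    refine IsMCMQuadruple.subsingleton ht0 ht hZ (y := y.restrict hWy)
      (h.of_injective W.injective_subtype (subtype_comp_restrict hWx) (subtype_comp_restrict hWd)
        (subtype_comp_restrict hWy) ?_)
      (fun a b hab => Subtype.ext (hy (congrArg Subtype.val hab)))
    ext w
    have hw : T w - t⁻¹ • w = 0 := hker w.2
    simp [(sub_eq_zero.1 hw).symm]
  · right
    rw [← Submodule.Quotient.subsingleton_iff]
    refine IsMCMQuadruple.subsingleton ht0 ht hZ (y := W.mapQ W y hWy)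
      (h.of_surjective W.mkQ_surjective (W.mapQ_mkQ W x (h := hWx)).symm
        (W.mapQ_mkQ W d (h := hWd)).symm (W.mapQ_mkQ W y).symm ?_) ?_
    · ext v
      simpa [← Submodule.Quotient.mk_smul, Submodule.Quotient.eq] using hrange (mem_range_self _ v)
    · refine injective_iff_surjective.2 fun q => ?_
      obtain ⟨v, rfl⟩ := W.mkQ_surjective q
      obtain ⟨u, rfl⟩ := injective_iff_surjective.1 hy v
      exact ⟨W.mkQ u, rfl⟩

end Irreducibility

theorem Matrix.rank_conj_diagonal_sub_smul_one_le_one {n K : Type*} [Fintype n] [DecidableEq n]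
    [Field K] (P : (Matrix n n K)ˣ) {w : n → K} {c : K}
    (hw : ∀ i j, w i ≠ c → w j ≠ c → i = j) :
    ((P : Matrix n n K) * diagonal w * (↑P⁻¹ : Matrix n n K) - c • 1).rank ≤ 1 := by
  classical
  have hconj : (P : Matrix n n K) * diagonal w * (↑P⁻¹ : Matrix n n K) - c • 1
      = P * diagonal (fun i => w i - c) * (↑P⁻¹ : Matrix n n K) := by
    rw [show diagonal (fun i => w i - c) = diagonal w - c • 1 by
      ext i j; by_cases i = j <;> simp_all [diagonal]]
    rw [mul_sub, sub_mul, mul_smul_comm, mul_one, smul_mul_assoc, P.mul_inv]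
  calc _ ≤ (diagonal fun i => w i - c).rank :=
        hconj ▸ (rank_mul_le_left _ _).trans (rank_mul_le_right _ _)
    _ = Fintype.card {i // w i - c ≠ 0} := rank_diagonal _
    _ ≤ 1 := Fintype.card_le_one_iff.2 fun a b =>
        Subtype.ext (hw _ _ (sub_ne_zero.1 a.2) (sub_ne_zero.1 b.2))

theorem statement17_general (N l : ℕ) (t : ℂ) (ht0 : t ≠ 0)
    (htroot : ∀ n : ℕ, n ≠ 0 → t ^ n ≠ 1)
    (Z : Fin l → ℂ) (hZ : ∀ i, Z i ≠ 0)
    (hZt : ∀ i j : Fin l, i ≠ j → ∀ n : ℤ, Z i ≠ t ^ n * Z j)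
    (X D Y T : Matrix (Fin N) (Fin N) ℂ)
    (hY : IsUnit Y)
    (hXD : X * D = ((List.ofFn (fun i : Fin l => (Z i)⁻¹ • Y - 1)).prod))
    (hDX : D * X = ((List.ofFn (fun i : Fin l => (Z i)⁻¹ • (Y * T) - 1)).prod))
    (hYX : Y * X = X * Y * T)
    (hYTD : Y * T * D = D * Y)
    (hT : ∃ P : (Matrix (Fin N) (Fin N) ℂ)ˣ,
      T = (P : Matrix (Fin N) (Fin N) ℂ) *
        Matrix.diagonal (fun i : Fin N => if (i : ℕ) = N - 1 then t ^ (N - 1) else t⁻¹) *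
        ((P⁻¹ : (Matrix (Fin N) (Fin N) ℂ)ˣ) : Matrix (Fin N) (Fin N) ℂ)) :
    ∀ W : Submodule ℂ (Fin N → ℂ),
      (∀ v ∈ W, X.mulVec v ∈ W) → (∀ v ∈ W, D.mulVec v ∈ W) →
      (∀ v ∈ W, Y.mulVec v ∈ W) → (∀ v ∈ W, T.mulVec v ∈ W) →
      W = ⊥ ∨ W = ⊤ := by
  intro W hWX hWD hWY hWT
  have hZ_ne : ∀ i j (n : ℕ), Z i ≠ t ^ (n + 1) * Z j := by
    intro i j n hij
    rcases eq_or_ne i j with rfl | hne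
    · exact htroot (n + 1) n.succ_ne_zero ((mul_eq_right₀ (hZ i)).1 hij.symm)
    · exact hZt i j hne (n + 1) (by exact_mod_cast hij)
  obtain ⟨P, hP⟩ := hT
  have hrank : (T - t⁻¹ • 1).rank ≤ 1 := hP ▸
    Matrix.rank_conj_diagonal_sub_smul_one_le_one P fun i j hi hj => Fin.ext <| by
      simp only [ne_eq, ite_eq_right_iff, not_forall] at hi hj
      rw [hi.1, hj.1]
  let e := (Matrix.toLinAlgEquiv' : Matrix (Fin N) (Fin N) ℂ ≃ₐ[ℂ] _).toAlgHom
  refine (IsMCMQuadruple.mk hXD hDX hYX hYTD |>.map e).eq_bot_or_eq_top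
    ht0 htroot hZ_ne ((End.isUnit_iff _).1 (hY.map e)).1 ?_ hWX hWD hWY hWT
  rw [← map_one e, ← map_smul, ← map_sub]
  exact hrank

theorem statement17 (N l : ℕ) (hN : 0 < N) (t : ℂ) (ht0 : t ≠ 0)
    (htroot : ∀ n : ℕ, n ≠ 0 → t ^ n ≠ 1)
    (Z : Fin l → ℂ) (hZ : ∀ i, Z i ≠ 0)
    (hZt : ∀ i j : Fin l, i ≠ j → ∀ n : ℤ, Z i ≠ t ^ n * Z j)
    (X D Y T : Matrix (Fin N) (Fin N) ℂ)
    (hY : IsUnit Y)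
    (hXD : X * D = ((List.ofFn (fun i : Fin l => (Z i)⁻¹ • Y - 1)).prod))
    (hDX : D * X = ((List.ofFn (fun i : Fin l => (Z i)⁻¹ • (Y * T) - 1)).prod))
    (hYX : Y * X = X * Y * T)
    (hYTD : Y * T * D = D * Y)
    (hT : ∃ P : (Matrix (Fin N) (Fin N) ℂ)ˣ,
      T = (P : Matrix (Fin N) (Fin N) ℂ) *
        Matrix.diagonal (fun i : Fin N => if (i : ℕ) = N - 1 then t ^ (N - 1) else t⁻¹) *
        ((P⁻¹ : (Matrix (Fin N) (Fin N) ℂ)ˣ) : Matrix (Fin N) (Fin N) ℂ)) :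
    ∀ W : Submodule ℂ (Fin N → ℂ),
      (∀ v ∈ W, X.mulVec v ∈ W) → (∀ v ∈ W, D.mulVec v ∈ W) →
      (∀ v ∈ W, Y.mulVec v ∈ W) → (∀ v ∈ W, T.mulVec v ∈ W) →
      W = ⊥ ∨ W = ⊤ :=
  statement17_general N l t ht0 htroot Z hZ hZt X D Y T hY hXD hDX hYX hYTD hT
end

section
/- In the degenerate cyclotomic DAHA HH_{N,deg}^l with D_1^{(l)} = X_1^{-1}(y_1 − z_1)⋯(y_1 − z_l), the commutation relations [D_1^{(l)}, X_1] = ∑_{r=1}^{l} ∏_{i=1}^{r−1}(y_1 − z_i + ħ − k∑_{j>1}s_{1j})·(ħ − k∑_{j>1}s_{1j})·∏_{i=r+1}^{l}(y_1 − z_i) and, for m > 1, [D_1^{(l)}, X_m] = k∑_{r=1}^{l} ∏_{i=1}^{r−1}(y_1 − z_i + ħ − k∑_{j>1}s_{1j})·s_{1m}·∏_{i=r+1}^{l}(y_1 − z_i) hold. -/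
section MyAux
variable {A : Type*} [Ring A] [Algebra ℂ A]
/-- push X through a product of factors -/
lemma myaux_push (X : A) (F G : ℂ → A) (h : ∀ c, F c * X = X * G c) :
    ∀ zs : List ℂ, (zs.map F).prod * X = X * (zs.map G).prod := by
  intro zs
  induction zs with
  | nil => simp
  | cons c zs ih =>
      simp only [List.map_cons, List.prod_cons, mul_assoc, ih]
      rw [← mul_assoc, ← mul_assoc, h]

/-- telescoping -/
lemma myaux_tel (T : A) (F G : ℂ → A) (h : ∀ c, G c - F c = T) :
    ∀ zs : List ℂ, (zs.map G).prod - (zs.map F).prod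
      = ∑ j ∈ Finset.range zs.length,
          ((zs.take j).map G).prod * T * ((zs.drop (j+1)).map F).prod := by
  intro zs
  induction zs with
  | nil => simp
  | cons c zs ih =>
      simp only [List.map_cons, List.prod_cons, List.length_cons]
      rw [Finset.sum_range_succ']
      have e1 : ∀ j, (((c :: zs).take (j+1)).map G).prod * T *
          (((c :: zs).drop (j+1+1)).map F).prod
          = G c * (((zs.take j).map G).prod * T * ((zs.drop (j+1)).map F).prod) := by
        intro j
        simp [List.take_cons, List.drop_succ_cons, mul_assoc]
      simp only [e1]
      rw [← Finset.mul_sum, ← ih]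
      have e0 : (((c :: zs).take 0).map G).prod * T *
          (((c :: zs).drop 1).map F).prod = T * (zs.map F).prod := by simp
      rw [e0]
      have : G c * (zs.map G).prod - F c * (zs.map F).prod
          = G c * ((zs.map G).prod - (zs.map F).prod) + (G c - F c) * (zs.map F).prod := by
        noncomm_ring
      rw [this, h c, add_comm]

/-- pushing X_m through a product of factors, picking up correction terms -/
lemma myaux_pushm (Xm B s : A) (F G : ℂ → A)
    (h1 : ∀ c, F c * Xm = Xm * F c + B * s)
    (h2 : ∀ c, F c * B = B * G c) :
    ∀ zs : List ℂ, (zs.map F).prod * Xm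
      = Xm * (zs.map F).prod
        + B * ∑ j ∈ Finset.range zs.length,
            ((zs.take j).map G).prod * s * ((zs.drop (j+1)).map F).prod := by
  intro zs
  induction zs with
  | nil => simp
  | cons c zs ih =>
      simp only [List.map_cons, List.prod_cons, List.length_cons]
      rw [Finset.sum_range_succ']
      have e1 : ∀ j, (((c :: zs).take (j+1)).map G).prod * s *
          (((c :: zs).drop (j+1+1)).map F).prod
          = G c * (((zs.take j).map G).prod * s * ((zs.drop (j+1)).map F).prod) := by
        intro j
        simp [List.take_cons, List.drop_succ_cons, mul_assoc]
      simp only [e1]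
      rw [← Finset.mul_sum]
      have e0 : (((c :: zs).take 0).map G).prod * s *
          (((c :: zs).drop 1).map F).prod = s * (zs.map F).prod := by simp
      rw [e0]
      calc F c * (zs.map F).prod * Xm
          = F c * ((zs.map F).prod * Xm) := by rw [mul_assoc]
        _ = F c * (Xm * (zs.map F).prod) + F c * (B * _) := by rw [ih, mul_add]
        _ = (F c * Xm) * (zs.map F).prod + (F c * B) * _ := by rw [← mul_assoc, ← mul_assoc]
        _ = (Xm * F c + B * s) * (zs.map F).prod + (B * G c) * _ := by rw [h1, h2]
        _ = _ := by
            rw [add_mul, mul_assoc, mul_assoc, mul_assoc, mul_add]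
            abel

lemma myaux_drop_range (m n : ℕ) (h : m ≤ n) :
    List.drop m (List.range n) = (List.range (n - m)).map (m + ·) := by
  have : n = m + (n - m) := by omega
  rw [this, List.range_add, List.drop_append_of_le_length (by simp)]
  simp

lemma myaux_Icc_range {M : Type*} [AddCommMonoid M] (f : ℕ → M) (l : ℕ) :
    ∑ r ∈ Finset.Icc 1 l, f r = ∑ j ∈ Finset.range l, f (1 + j) := by
  have : Finset.Icc 1 l = Finset.Ico 1 (l + 1) := by
    ext x; simp [Nat.lt_succ_iff]
  rw [this, Finset.sum_Ico_eq_sum_range]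
  simp

end MyAux


/- STATEMENT 19: In the degenerate cyclotomic DAHA HH_{N,deg}^l with
D_1^{(l)} = X_1^{-1}(y_1 − z_1)⋯(y_1 − z_l), one has
[D_1^{(l)}, X_1] = ∑_{r=1}^{l} ∏_{i=1}^{r−1}(y_1 − z_i + hbar − k∑_{j>1}s_{1j})
  ·(hbar − k∑_{j>1}s_{1j})·∏_{i=r+1}^{l}(y_1 − z_i),
and for m > 1,
[D_1^{(l)}, X_m] = k∑_{r=1}^{l} ∏_{i=1}^{r−1}(y_1 − z_i + hbar − k∑_{j>1}s_{1j})
  ·s_{1m}·∏_{i=r+1}^{l}(y_1 − z_i).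

The ambient algebra is any algebra with elements satisfying the defining
relations of the degenerate (trigonometric) DAHA of GL_N (Proposition
`trigDAHA`); the index 1 is realized as the first index of Fin N. -/

/-- The degenerate (trigonometric) DAHA of GL_N: the group S_N ⋉ ℤ^N (realized
via a monoid homomorphism w from S_N and invertible commuting X_i) together with
the y_i satisfying the relations of Proposition `trigDAHA`. -/
structure TrigDAHA (N : ℕ) (hbar k : ℂ) (A : Type*) [Ring A] [Algebra ℂ A] where
  w : Equiv.Perm (Fin N) →* A
  X : Fin N → A
  Xinv : Fin N → A
  y : Fin N → A
  hXinv : ∀ i, X i * Xinv i = 1 ∧ Xinv i * X i = 1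
  hXcomm : ∀ i j, X i * X j = X j * X i
  hycomm : ∀ i j, y i * y j = y j * y i
  hwX : ∀ σ i, w σ * X i = X (σ i) * w σ
  hwy_swap : ∀ i j, i ≠ j →
    w (Equiv.swap i j) * y i = y j * w (Equiv.swap i j) + algebraMap ℂ A k
  hwy_other : ∀ i j m, i ≠ j → m ≠ i → m ≠ j →
    w (Equiv.swap i j) * y m = y m * w (Equiv.swap i j)
  hyX_gt : ∀ i j, j < i →
    y i * X j - X j * y i = algebraMap ℂ A k * (X j * w (Equiv.swap i j))
  hyX_lt : ∀ i j, i < j →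
    y i * X j - X j * y i = algebraMap ℂ A k * (X i * w (Equiv.swap i j))
  hyX_eq : ∀ i,
    y i * X i - X i * y i = algebraMap ℂ A hbar * X i
      - algebraMap ℂ A k *
          ((∑ r ∈ Finset.univ.filter (fun r => r < i), X r * w (Equiv.swap i r))
            + (∑ r ∈ Finset.univ.filter (fun r => i < r), X i * w (Equiv.swap i r)))

namespace TrigDAHA

variable {N : ℕ} {hbar k : ℂ} {A : Type*} [Ring A] [Algebra ℂ A]

/-- D_1^{(l)} = X_1^{-1}(y_1 − z_1)⋯(y_1 − z_l) -/
noncomputable def D1l (H : TrigDAHA N hbar k A) (l : ℕ) (z : ℕ → ℂ) (i₁ : Fin N) : A :=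
  H.Xinv i₁ * (((List.range l).map (fun i => H.y i₁ - algebraMap ℂ A (z (i + 1)))).prod)

/-- ∑_{j>1} s_{1j} -/
noncomputable def Ssum (H : TrigDAHA N hbar k A) (i₁ : Fin N) : A :=
  ∑ j ∈ Finset.univ.erase i₁, H.w (Equiv.swap i₁ j)

end TrigDAHA

theorem statement19 {A : Type*} [Ring A] [Algebra ℂ A] (N : ℕ) (hN : 2 ≤ N)
    (hbar k : ℂ) (l : ℕ) (z : ℕ → ℂ) (H : TrigDAHA N hbar k A)
    (i₁ : Fin N) (hi₁ : i₁ = ⟨0, by omega⟩) :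
    (H.D1l l z i₁ * H.X i₁ - H.X i₁ * H.D1l l z i₁ =
      ∑ r ∈ Finset.Icc 1 l,
        (((List.range (r - 1)).map (fun i =>
            H.y i₁ - algebraMap ℂ A (z (i + 1)) + algebraMap ℂ A hbar
              - algebraMap ℂ A k * H.Ssum i₁)).prod) *
          (algebraMap ℂ A hbar - algebraMap ℂ A k * H.Ssum i₁) *
          (((List.range (l - r)).map (fun i =>
            H.y i₁ - algebraMap ℂ A (z (r + i + 1)))).prod)) ∧
    (∀ m : Fin N, m ≠ i₁ →
      H.D1l l z i₁ * H.X m - H.X m * H.D1l l z i₁ =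
        algebraMap ℂ A k *
          ∑ r ∈ Finset.Icc 1 l,
            (((List.range (r - 1)).map (fun i =>
                H.y i₁ - algebraMap ℂ A (z (i + 1)) + algebraMap ℂ A hbar
                  - algebraMap ℂ A k * H.Ssum i₁)).prod) *
              H.w (Equiv.swap i₁ m) *
              (((List.range (l - r)).map (fun i =>
                H.y i₁ - algebraMap ℂ A (z (r + i + 1)))).prod)) := by
  have hcent : ∀ (c : ℂ) (a : A), algebraMap ℂ A c * a = a * algebraMap ℂ A c :=
    fun c a => Algebra.commutes c a
  obtain ⟨hXi1, hXi2⟩ := H.hXinv i₁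
  -- the two key single-variable commutation relations
  have hfilt1 : (Finset.univ.filter (fun r => r < i₁)) = (∅ : Finset (Fin N)) := by
    apply Finset.filter_eq_empty_iff.mpr
    intro r _
    rw [hi₁]
    simp [Fin.lt_def]
  have hfilt2 : (Finset.univ.filter (fun r => i₁ < r)) = Finset.univ.erase i₁ := by
    ext r
    simp only [Finset.mem_filter, Finset.mem_erase, Finset.mem_univ, true_and, and_true]
    rw [hi₁]
    simp only [Fin.lt_def, Ne, Fin.ext_iff]
    omega
  have h := H.hyX_eq i₁
  rw [hfilt1, hfilt2, Finset.sum_empty, zero_add, ← Finset.mul_sum] at h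
  have hSdef : H.Ssum i₁ = ∑ r ∈ Finset.univ.erase i₁, H.w (Equiv.swap i₁ r) := rfl
  rw [← hSdef] at h
  have h' : H.y i₁ * H.X i₁ = H.X i₁ * H.y i₁ +
      (algebraMap ℂ A hbar * H.X i₁ - algebraMap ℂ A k * (H.X i₁ * H.Ssum i₁)) := by
    rw [← h]; abel
  have c3 : algebraMap ℂ A k * (H.X i₁ * H.Ssum i₁)
      = H.X i₁ * (algebraMap ℂ A k * H.Ssum i₁) := by
    rw [← mul_assoc, hcent k (H.X i₁), mul_assoc]
  have hFX : ∀ c : ℂ, (H.y i₁ - algebraMap ℂ A c) * H.X i₁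
      = H.X i₁ * (H.y i₁ - algebraMap ℂ A c + algebraMap ℂ A hbar
          - algebraMap ℂ A k * H.Ssum i₁) := by
    intro c
    rw [sub_mul, h', hcent c (H.X i₁), hcent hbar (H.X i₁), c3,
      mul_sub, mul_add, mul_sub]
    abel
  have hGF : ∀ c : ℂ, (H.y i₁ - algebraMap ℂ A c + algebraMap ℂ A hbar
      - algebraMap ℂ A k * H.Ssum i₁) - (H.y i₁ - algebraMap ℂ A c)
      = algebraMap ℂ A hbar - algebraMap ℂ A k * H.Ssum i₁ := by
    intro c; abel
  set F : ℂ → A := fun c => H.y i₁ - algebraMap ℂ A c with hFdef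
  set G : ℂ → A := fun c => H.y i₁ - algebraMap ℂ A c + algebraMap ℂ A hbar
      - algebraMap ℂ A k * H.Ssum i₁ with hGdef
  set g : ℕ → ℂ := fun i => z (i + 1) with hgdef
  set zs : List ℂ := (List.range l).map g with hzsdef
  have hzslen : zs.length = l := by simp [hzsdef]
  have hD : H.D1l l z i₁ = H.Xinv i₁ * (zs.map F).prod := by
    rw [TrigDAHA.D1l, hzsdef, List.map_map]
    rfl
  have hpush := myaux_push (H.X i₁) F G hFX zs
  -- term-by-term conversion of the sums
  have htake : ∀ j, j < l → (zs.take j).map G = (List.range (1 + j - 1)).map (fun i =>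
      H.y i₁ - algebraMap ℂ A (z (i + 1)) + algebraMap ℂ A hbar
        - algebraMap ℂ A k * H.Ssum i₁) := by
    intro j hj
    have hj1 : 1 + j - 1 = j := by omega
    rw [hj1, hzsdef, ← List.map_take, List.take_range, Nat.min_eq_left hj.le,
      List.map_map]
    rfl
  have hdrop : ∀ j, j < l → (zs.drop (j + 1)).map F = (List.range (l - (1 + j))).map
      (fun i => H.y i₁ - algebraMap ℂ A (z (1 + j + i + 1))) := by
    intro j hj
    rw [hzsdef, ← List.map_drop, myaux_drop_range (j + 1) l (by omega), List.map_map,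
      List.map_map]
    have hl : l - (j + 1) = l - (1 + j) := by omega
    rw [hl]
    apply List.map_congr_left
    intro i _
    simp only [Function.comp_apply, hFdef, hgdef]
    have he : j + 1 + i + 1 = 1 + j + i + 1 := by omega
    rw [he]
  constructor
  · -- part 1
    have e1 : H.D1l l z i₁ * H.X i₁ = (zs.map G).prod := by
      rw [hD, mul_assoc, hpush, ← mul_assoc, hXi2, one_mul]
    have e2 : H.X i₁ * H.D1l l z i₁ = (zs.map F).prod := by
      rw [hD, ← mul_assoc, hXi1, one_mul]
    rw [e1, e2, myaux_tel (algebraMap ℂ A hbar - algebraMap ℂ A k * H.Ssum i₁) F G hGF zs,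
      hzslen, myaux_Icc_range]
    apply Finset.sum_congr rfl
    intro j hj
    have hj' : j < l := Finset.mem_range.mp hj
    rw [htake j hj', hdrop j hj']
  · -- part 2
    intro m hm
    have him : i₁ < m := by
      rw [hi₁]
      simp only [Fin.lt_def]
      have : m.val ≠ 0 := by
        intro h0
        exact hm (by rw [hi₁]; exact Fin.ext h0)
      omega
    have hXim : H.Xinv i₁ * H.X m = H.X m * H.Xinv i₁ := by
      calc H.Xinv i₁ * H.X m = H.Xinv i₁ * H.X m * (H.X i₁ * H.Xinv i₁) := by
            rw [hXi1, mul_one]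
        _ = H.Xinv i₁ * (H.X m * H.X i₁) * H.Xinv i₁ := by
            rw [mul_assoc, mul_assoc, mul_assoc]
        _ = H.Xinv i₁ * (H.X i₁ * H.X m) * H.Xinv i₁ := by rw [H.hXcomm m i₁]
        _ = (H.Xinv i₁ * H.X i₁) * (H.X m * H.Xinv i₁) := by
            rw [mul_assoc, mul_assoc, mul_assoc]
        _ = H.X m * H.Xinv i₁ := by rw [hXi2, one_mul]
    have hm' := H.hyX_lt i₁ m him
    have hm'' : H.y i₁ * H.X m = H.X m * H.y i₁
        + algebraMap ℂ A k * (H.X i₁ * H.w (Equiv.swap i₁ m)) := by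
      rw [← hm']; abel
    have h1 : ∀ c : ℂ, F c * H.X m = H.X m * F c
        + (algebraMap ℂ A k * H.X i₁) * H.w (Equiv.swap i₁ m) := by
      intro c
      simp only [hFdef]
      rw [sub_mul, hm'', hcent c (H.X m), mul_sub, mul_assoc]
      abel
    have h2 : ∀ c : ℂ, F c * (algebraMap ℂ A k * H.X i₁)
        = (algebraMap ℂ A k * H.X i₁) * G c := by
      intro c
      rw [← mul_assoc, ← hcent k (F c), mul_assoc, hFX c, ← mul_assoc]
    have hpm := myaux_pushm (H.X m) (algebraMap ℂ A k * H.X i₁)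
      (H.w (Equiv.swap i₁ m)) F G h1 h2 zs
    have e3 : H.Xinv i₁ * ((algebraMap ℂ A k * H.X i₁)
        * ∑ j ∈ Finset.range zs.length,
            ((zs.take j).map G).prod * H.w (Equiv.swap i₁ m) * ((zs.drop (j + 1)).map F).prod)
        = algebraMap ℂ A k * ∑ j ∈ Finset.range zs.length,
            ((zs.take j).map G).prod * H.w (Equiv.swap i₁ m)
              * ((zs.drop (j + 1)).map F).prod := by
      rw [← mul_assoc, ← mul_assoc, ← hcent k (H.Xinv i₁),
        mul_assoc (algebraMap ℂ A k), hXi2, mul_one]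
    have e4 : H.D1l l z i₁ * H.X m = H.X m * H.D1l l z i₁
        + algebraMap ℂ A k * ∑ j ∈ Finset.range zs.length,
            ((zs.take j).map G).prod * H.w (Equiv.swap i₁ m)
              * ((zs.drop (j + 1)).map F).prod := by
      rw [hD, mul_assoc, hpm, mul_add, e3, ← mul_assoc, hXim, mul_assoc]
    rw [e4, add_sub_cancel_left, hzslen, myaux_Icc_range]
    congr 1
    apply Finset.sum_congr rfl
    intro j hj
    have hj' : j < l := Finset.mem_range.mp hj
    rw [htake j hj', hdrop j hj']
end
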